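/- arXiv:2506.16557 — 3 statements merged into one kernel-verified Lean document; each statement's English description precedes it below -/
import Mathlib

section
/- Let M be an LTS with alphabet Σ = Ω ∪̇ Υ, controllable events Σ_c and uncontrollable events Σᵤ, let ∼_Υ be a synthesis observational equivalence on M with respect to Υ, and let M′ = M/∼_Υ be the quotient; assume M′ is minimized with respect to synthesis observational equivalence, i.e., no synthesis observational equivalence on M′ with respect to Υ relates two distinct states of M′. If s is a state of M′ and π ∈ Υ* is a nonempty finite sequence of events with s →^π s in M′, then for every event l occurring in π we have s →ˡ s in M′. -/
namespace CompSynth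

/-- A labelled transition system over event labels `E`. -/
structure LTS (E : Type) where
  State : Type
  finState : Finite State
  alph : Finset E
  trans : State → E → State → Prop
  init : State

namespace LTS

variable {E : Type} [DecidableEq E]

/-- Parallel composition of two LTSs. -/
def par (M N : LTS E) : LTS E where
  State := M.State × N.State
  finState := by haveI := M.finState; haveI := N.finState; exact inferInstance
  alph := M.alph ∪ N.alph
  trans := fun s l t =>
    (M.trans s.1 l t.1 ∧ l ∈ M.alph ∧ l ∉ N.alph ∧ t.2 = s.2) ∨
    (N.trans s.2 l t.2 ∧ l ∈ N.alph ∧ l ∉ M.alph ∧ t.1 = s.1) ∨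
    (M.trans s.1 l t.1 ∧ N.trans s.2 l t.2 ∧ l ∈ M.alph ∧ l ∈ N.alph)
  init := (M.init, N.init)

/-- The trivial (one-state, empty-alphabet) LTS. -/
def unitLTS : LTS E where
  State := Unit
  finState := inferInstance
  alph := ∅
  trans := fun _ _ _ => False
  init := ()

/-- Parallel composition of a finite list of LTSs. -/
def parList : List (LTS E) → LTS E
  | [] => unitLTS
  | [M] => M
  | M :: Ms => M.par (parList Ms)

/-- Reachable states of an LTS. -/
inductive Reach (M : LTS E) : M.State → Prop
  | init : Reach M M.init
  | step {s l t} : Reach M s → M.trans s l t → Reach M t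

/-- Finite runs (paths) between states, labelled by a word. -/
inductive Path (M : LTS E) : M.State → List E → M.State → Prop
  | nil (s : M.State) : Path M s [] s
  | cons {s t u : M.State} {l : E} {w : List E} :
      M.trans s l t → Path M t w u → Path M s (l :: w) u

/-- Finite traces of an LTS. -/
def FinTr (M : LTS E) (w : List E) : Prop := ∃ s, Path M M.init w s

/-- Infinite traces of an LTS. -/
def InfTr (M : LTS E) (π : ℕ → E) : Prop :=
  ∃ ρ : ℕ → M.State, ρ 0 = M.init ∧ ∀ i, M.trans (ρ i) (π i) (ρ (i + 1))

/-- No state has two outgoing transitions with the same label. -/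
def Deterministic (M : LTS E) : Prop :=
  ∀ s l t t', M.trans s l t → M.trans s l t' → t = t'

/-- Every reachable state has an outgoing transition. -/
def DeadlockFree (M : LTS E) : Prop :=
  ∀ s, Reach M s → ∃ l t, M.trans s l t

/-- `C` is legal for `M` w.r.t. the uncontrollable events `Eu`. -/
def Legal (M C : LTS E) (Eu : Finset E) : Prop :=
  ∀ p : (M.par C).State, Reach (M.par C) p → ∀ l ∈ Eu,
    ((∃ q, (M.par C).trans p l q) ↔ (∃ t, M.trans p.1 l t))

/-- Restriction of an LTS to a set of states containing the initial state. -/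
def restrict (M : LTS E) (S' : Set M.State) (h : M.init ∈ S') : LTS E where
  State := {s // s ∈ S'}
  finState := by haveI := M.finState; exact inferInstance
  alph := M.alph
  trans := fun x l y => M.trans x.1 l y.1
  init := ⟨M.init, h⟩

/-- The controlled subplant of `M` by the safe controller `restrict M S' h`
with respect to the uncontrolled shared events `Ω`: transitions of the safe
controller together with transitions to a fresh deadlock state `⊥` (here `none`)
on events of `Ω` enabled in `M` but removed by the safe controller. -/
def ctrlSub (M : LTS E) (S' : Set M.State) (h : M.init ∈ S') (Ω : Finset E) : LTS E where
  State := Option {s // s ∈ S'}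
  finState := by
    haveI := M.finState
    haveI := Fintype.ofFinite M.State
    haveI : Finite {s // s ∈ S'} := inferInstance
    haveI := Fintype.ofFinite {s // s ∈ S'}
    exact inferInstance
  alph := M.alph
  trans := fun x l y =>
    match x, y with
    | some a, some b => M.trans a.1 l b.1
    | some a, none =>
        l ∈ Ω ∧ (∃ t, M.trans a.1 l t) ∧ ∀ t, t ∈ S' → ¬ M.trans a.1 l t
    | none, _ => False
  init := some ⟨M.init, h⟩

/-- Quotient LTS by a relation on states. -/
def quot (M : LTS E) (r : M.State → M.State → Prop) : LTS E where
  State := Quot r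
  finState := by
    haveI := M.finState
    exact Finite.of_surjective (Quot.mk r) (fun q => Quot.exists_rep q)
  alph := M.alph
  trans := fun qs l qt => ∃ s t, M.trans s l t ∧ Quot.mk r s = qs ∧ Quot.mk r t = qt
  init := Quot.mk r M.init

/-- Removal of self-loop transitions labelled by events in `μs`. -/
def rmLoops (P : LTS E) (μs : Finset E) : LTS E :=
  { P with trans := fun s l t => P.trans s l t ∧ ¬(l ∈ μs ∧ t = s) }

/-- Synthesis observational equivalence on `M` w.r.t. local events `Υ`,
with controllable events `Ec` (uncontrollable events are those not in `Ec`). -/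
def IsSOE (M : LTS E) (Ec Υ : Finset E) (r : M.State → M.State → Prop) : Prop :=
  Equivalence r ∧
  (∀ x₁ x₂ y₁ u, r x₁ x₂ → u ∈ M.alph → u ∉ Ec → M.trans x₁ u y₁ →
    ∃ (π₁ π₂ : List E) (y₂ : M.State),
      (∀ l ∈ π₁, l ∈ Υ ∧ l ∉ Ec) ∧ (∀ l ∈ π₂, l ∈ Υ ∧ l ∉ Ec) ∧
      Path M x₂ (π₁ ++ (if u ∈ Υ then [] else [u]) ++ π₂) y₂ ∧ r y₁ y₂) ∧
  (∀ x₁ x₂ y₁ c, r x₁ x₂ → c ∈ Ec → M.trans x₁ c y₁ →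
    ∃ (n : ℕ) (xs : Fin (n + 1) → M.State) (τ : Fin n → E) (y₂ : M.State),
      xs 0 = x₂ ∧
      (∀ i : Fin n, M.trans (xs i.castSucc) (τ i) (xs i.succ) ∧ τ i ∈ Υ ∧
        (τ i ∈ Ec → r x₁ (xs i.succ))) ∧
      (if c ∈ Υ then y₂ = xs (Fin.last n) else M.trans (xs (Fin.last n)) c y₂) ∧
      r y₁ y₂)

/-- `l` is a self-loop event added by the `r`-reduction of `M`. -/
def SelfLoopAdded (M : LTS E) (r : M.State → M.State → Prop) (l : E) : Prop :=
  ∃ s t, M.trans s l t ∧ r s t ∧ s ≠ t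

end LTS

/-- Syntax of LTL formulas over atomic events in `E`. -/
inductive LTL (E : Type) where
  | tru : LTL E
  | atom : E → LTL E
  | neg : LTL E → LTL E
  | orf : LTL E → LTL E → LTL E
  | next : LTL E → LTL E
  | untl : LTL E → LTL E → LTL E

namespace LTL

variable {E : Type}

/-- Satisfaction of an LTL formula by an infinite trace at a position. -/
def satAt (π : ℕ → E) : LTL E → ℕ → Prop
  | tru, _ => True
  | atom e, i => π i = e
  | neg φ, i => ¬ satAt π φ i
  | orf φ ψ, i => satAt π φ i ∨ satAt π ψ i
  | next φ, i => satAt π φ (i + 1)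
  | untl φ ψ, i => ∃ k, i ≤ k ∧ satAt π ψ k ∧ ∀ j, i ≤ j → j < k → satAt π φ j

/-- Satisfaction of an LTL formula by an infinite trace. -/
def sat (π : ℕ → E) (φ : LTL E) : Prop := satAt π φ 0

def fls : LTL E := neg tru
def andf (φ ψ : LTL E) : LTL E := neg (orf (neg φ) (neg ψ))
def imp (φ ψ : LTL E) : LTL E := orf (neg φ) ψ
def ev (φ : LTL E) : LTL E := untl tru φ
def alw (φ : LTL E) : LTL E := neg (ev (neg φ))
def alwEv (φ : LTL E) : LTL E := alw (ev φ)
def conjList (l : List (LTL E)) : LTL E := l.foldr andf tru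
def disjList (l : List (LTL E)) : LTL E := l.foldr orf fls

/-- The atomic events occurring in a formula. -/
def events [DecidableEq E] : LTL E → Finset E
  | tru => ∅
  | atom e => {e}
  | neg φ => events φ
  | orf φ ψ => events φ ∪ events ψ
  | next φ => events φ
  | untl φ ψ => events φ ∪ events ψ

/-- Boolean combinations of atomic events (no temporal operators). -/
def isBool : LTL E → Prop
  | tru => True
  | atom _ => True
  | neg φ => isBool φ
  | orf φ ψ => isBool φ ∧ isBool ψ
  | next _ => False
  | untl _ _ => False

end LTL

variable {E : Type} [DecidableEq E]

/-- The GR(1) formula `⋀ □◇aᵢ ⟹ ⋀ □◇gⱼ`. -/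
def GR1 (As Gs : List (LTL E)) : LTL E :=
  LTL.imp (LTL.conjList (As.map LTL.alwEv)) (LTL.conjList (Gs.map LTL.alwEv))

/-- The boolean formula `⋀_{l ∈ μ} ¬l`. -/
noncomputable def finsetNegConj (μ : Finset E) : LTL E :=
  LTL.conjList (μ.toList.map fun l => LTL.neg (LTL.atom l))

/-- The formula `□◇(⋀_{l ∈ μ} ¬l) ⟹ φ`. -/
noncomputable def muGoal (μ : Finset E) (φ : LTL E) : LTL E :=
  LTL.imp (LTL.alwEv (finsetNegConj μ)) φ

open LTS

/-- `C` is a solution of the control problem `⟨P, Ec, φ⟩`. -/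
def Solution (P : LTS E) (Ec : Finset E) (φ : LTL E) (C : LTS E) : Prop :=
  Deterministic C ∧ Legal P C (P.alph \ Ec) ∧ DeadlockFree (P.par C) ∧
  ∀ π : ℕ → E, InfTr (P.par C) π → LTL.sat π φ

/-- `s` is a winning state of the control problem `⟨P, Ec, φ⟩`. -/
def Winning (P : LTS E) (Ec : Finset E) (φ : LTL E) (s : P.State) : Prop :=
  ∃ C : LTS E, Solution P Ec φ C ∧ ∃ c : C.State, Reach (C.par P) (c, s)

/-- Controllers of the synthesis tuple `(Ms, Cs, μ)`. -/
def Cont (Ec : Finset E) (φ : LTL E) (Ms Cs : List (LTS E)) (μ : Finset E) :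
    Set (LTS E) :=
  { X | ∃ CM : LTS E, Solution (parList Ms) Ec (muGoal μ φ) CM ∧ X = parList (CM :: Cs) }

/-!
Call two states equivalent when each reaches the other along a path of uncontrollable local
events. This is a synthesis observational equivalence as soon as every controllable local
transition is matched by such a path, because an equivalent state can first walk to its partner
without passing a controllable event. In a quotient by a synthesis observational equivalence
`r`, clause (2) applied to `x ∼ x` matches a controllable local transition `x →c y` by a local
run whose controllable steps stay in the class of `x`; in the quotient those steps vanish. So
minimality collapses mutual reachability to equality, and all states on a local cycle through
`s` reach each other, hence equal `s`.
-/

namespace LTS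

section Reachability

omit [DecidableEq E]

variable {N : LTS E} {Ec Υ : Finset E}

variable (N Ec Υ) in
def LocalUncStep (x y : N.State) : Prop :=
  ∃ l ∈ Υ, l ∉ Ec ∧ N.trans x l y

variable (N Ec Υ) in
abbrev LocalUncReach : N.State → N.State → Prop :=
  Relation.ReflTransGen (N.LocalUncStep Ec Υ)

variable (N Ec Υ) in
def MutualReach (x y : N.State) : Prop :=
  N.LocalUncReach Ec Υ x y ∧ N.LocalUncReach Ec Υ y x

variable (N Ec Υ) in
def ControllableLocalShadowed : Prop :=
  ∀ x y c, c ∈ Ec → c ∈ Υ → N.trans x c y → N.LocalUncReach Ec Υ x y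

theorem equivalence_mutualReach : Equivalence (N.MutualReach Ec Υ) where
  refl _ := ⟨.refl, .refl⟩
  symm h := ⟨h.2, h.1⟩
  trans h₁ h₂ := ⟨h₁.1.trans h₂.1, h₂.2.trans h₁.2⟩

theorem Path.append {x y z : N.State} {w v : List E} (h₁ : N.Path x w y) (h₂ : N.Path y v z) :
    N.Path x (w ++ v) z := by
  induction h₁ with
  | nil => exact h₂
  | cons h _ ih => exact .cons h (ih h₂)

theorem LocalUncReach.exists_path {x y : N.State} (h : N.LocalUncReach Ec Υ x y) :
    ∃ w, (∀ l ∈ w, l ∈ Υ ∧ l ∉ Ec) ∧ N.Path x w y := by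
  induction h using Relation.ReflTransGen.head_induction_on with
  | refl => exact ⟨[], by simp, .nil _⟩
  | head step _ ih =>
    obtain ⟨l, hlΥ, hlEc, hl⟩ := step
    obtain ⟨w, hw, hpath⟩ := ih
    exact ⟨l :: w, by simpa [hlΥ, hlEc] using hw, .cons hl hpath⟩

theorem LocalUncReach.exists_run {x y : N.State} (h : N.LocalUncReach Ec Υ x y) :
    ∃ (n : ℕ) (xs : Fin (n + 1) → N.State) (τ : Fin n → E),
      xs 0 = x ∧ xs (Fin.last n) = y ∧
      ∀ i, N.trans (xs i.castSucc) (τ i) (xs i.succ) ∧ τ i ∈ Υ ∧ τ i ∉ Ec := by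
  induction h using Relation.ReflTransGen.head_induction_on with
  | refl => exact ⟨0, fun _ => y, Fin.elim0, rfl, rfl, fun i => i.elim0⟩
  | @head x t step _ ih =>
    obtain ⟨l, hlΥ, hlEc, hl⟩ := step
    obtain ⟨n, xs, τ, h0, hlast, hrun⟩ := ih
    refine ⟨n + 1, Fin.cons x xs, Fin.cons l τ, rfl,
      by simpa [← Fin.succ_last] using hlast, ?_⟩
    intro i
    induction i using Fin.cases with
    | zero => simpa [h0] using ⟨hl, hlΥ, hlEc⟩
    | succ j => simpa [← Fin.succ_castSucc] using hrun j

theorem localUncReach_of_path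
    (hshadow : N.ControllableLocalShadowed Ec Υ)
    {x y : N.State} {w : List E} (hpath : N.Path x w y) (hloc : ∀ l ∈ w, l ∈ Υ) :
    N.LocalUncReach Ec Υ x y := by
  induction hpath with
  | nil => exact .refl
  | @cons x t _ l _ hl _ ih =>
    have hlΥ := hloc l List.mem_cons_self
    have hstep : N.LocalUncReach Ec Υ x t := by
      by_cases hlEc : l ∈ Ec
      · exact hshadow x t l hlEc hlΥ hl
      · exact .single ⟨l, hlΥ, hlEc, hl⟩
    exact hstep.trans (ih fun l' hl' => hloc l' (List.mem_cons_of_mem _ hl'))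

theorem trans_self_of_mem_of_path
    (hshadow : N.ControllableLocalShadowed Ec Υ)
    (hmin : ∀ x y, N.MutualReach Ec Υ x y → x = y)
    {s : N.State} {π : List E} (hpath : N.Path s π s) (hloc : ∀ l ∈ π, l ∈ Υ) :
    ∀ l ∈ π, N.trans s l s := by
  suffices ∀ {x y w}, N.Path x w y → (∀ l ∈ w, l ∈ Υ) → N.LocalUncReach Ec Υ s x →
      N.LocalUncReach Ec Υ y s → ∀ l ∈ w, N.trans s l s from this hpath hloc .refl .refl
  intro x y w hpath hloc hsx hys
  induction hpath with
  | nil => simp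
  | @cons x t y l w hl hrest ih =>
    have hloc' : ∀ l' ∈ w, l' ∈ Υ := fun l' hl' => hloc l' (List.mem_cons_of_mem _ hl')
    have hty : N.LocalUncReach Ec Υ t y := localUncReach_of_path hshadow hrest hloc'
    have hxt : N.LocalUncReach Ec Υ x t :=
      localUncReach_of_path hshadow (.cons hl (.nil t))
        (by simpa using hloc l List.mem_cons_self)
    have hst : N.LocalUncReach Ec Υ s t := hsx.trans hxt
    obtain rfl : s = x := hmin s x ⟨hsx, hxt.trans (hty.trans hys)⟩
    obtain rfl : s = t := hmin s t ⟨hst, hty.trans hys⟩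
    simpa [hl] using ih hloc' hst hys

theorem localUncReach_quot_of_run {M : LTS E} {r : M.State → M.State → Prop} {a : M.State}
    {n : ℕ} {xs : Fin (n + 1) → M.State} {τ : Fin n → E} (h0 : xs 0 = a)
    (hrun : ∀ i, M.trans (xs i.castSucc) (τ i) (xs i.succ) ∧ τ i ∈ Υ ∧
      (τ i ∈ Ec → r a (xs i.succ)))
    (i : Fin (n + 1)) : (M.quot r).LocalUncReach Ec Υ (Quot.mk r a) (Quot.mk r (xs i)) := by
  induction i using Fin.induction with
  | zero => exact h0 ▸ .refl
  | succ i ih =>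
    by_cases hc : τ i ∈ Ec
    · exact Quot.sound ((hrun i).2.2 hc) ▸ .refl
    · exact ih.tail ⟨τ i, (hrun i).2.1, hc, _, _, (hrun i).1, rfl, rfl⟩

end Reachability

theorem isSOE_mutualReach {N : LTS E} {Ec Υ : Finset E}
    (hshadow : N.ControllableLocalShadowed Ec Υ) :
    N.IsSOE Ec Υ (N.MutualReach Ec Υ) := by
  refine ⟨equivalence_mutualReach, ?_, ?_⟩
  · intro x₁ x₂ y₁ u hx _ hu hxy
    obtain ⟨w, hw, hpath⟩ := hx.2.exists_path
    have hpath' := hpath.append (.cons hxy (.nil y₁))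
    by_cases huΥ : u ∈ Υ
    · refine ⟨w ++ [u], [], y₁, List.forall_mem_append.2 ⟨hw, by simp [huΥ, hu]⟩, by simp,
        by simpa [huΥ] using hpath', equivalence_mutualReach.refl y₁⟩
    · exact ⟨w, [], y₁, hw, by simp, by simpa [huΥ] using hpath',
        equivalence_mutualReach.refl y₁⟩
  · intro x₁ x₂ y₁ c hx hc hxy
    by_cases hcΥ : c ∈ Υ
    · obtain ⟨n, xs, τ, h0, hlast, hrun⟩ :=
        LocalUncReach.exists_run (hx.2.trans (hshadow x₁ y₁ c hc hcΥ hxy))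
      exact ⟨n, xs, τ, y₁, h0,
        fun i => ⟨(hrun i).1, (hrun i).2.1, (absurd · (hrun i).2.2)⟩,
        by simpa [hcΥ] using hlast.symm, equivalence_mutualReach.refl y₁⟩
    · obtain ⟨n, xs, τ, h0, hlast, hrun⟩ := hx.2.exists_run
      exact ⟨n, xs, τ, y₁, h0,
        fun i => ⟨(hrun i).1, (hrun i).2.1, (absurd · (hrun i).2.2)⟩,
        by simpa [hcΥ, hlast] using hxy, equivalence_mutualReach.refl y₁⟩

theorem IsSOE.quot_controllableLocalShadowed {M : LTS E} {Ec Υ : Finset E}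
    {r : M.State → M.State → Prop} (hr : M.IsSOE Ec Υ r) :
    (M.quot r).ControllableLocalShadowed Ec Υ := by
  rintro _ _ c hc hcΥ ⟨a, b, hab, rfl, rfl⟩
  obtain ⟨n, xs, τ, y₂, h0, hrun, hlast, hb⟩ := hr.2.2 a a b c (hr.1.refl a) hc hab
  rw [if_pos hcΥ] at hlast
  rw [Quot.sound hb, hlast]
  exact localUncReach_quot_of_run h0 hrun (Fin.last n)

end LTS

theorem minimized_quotient_selfloops_general
    (M : LTS E) (Ec Υ : Finset E)
    (r : M.State → M.State → Prop) (hr : LTS.IsSOE M Ec Υ r)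
    (hmin : ∀ r' : (M.quot r).State → (M.quot r).State → Prop,
      LTS.IsSOE (M.quot r) Ec Υ r' → ∀ x y, r' x y → x = y)
    (s : (M.quot r).State) (π : List E)
    (hloc : ∀ l ∈ π, l ∈ Υ) (hpath : LTS.Path (M.quot r) s π s) :
    ∀ l ∈ π, (M.quot r).trans s l s := by
  have hshadow := hr.quot_controllableLocalShadowed
  exact LTS.trans_self_of_mem_of_path hshadow (hmin _ (LTS.isSOE_mutualReach hshadow)) hpath hloc

/-- In a quotient LTS that is minimized w.r.t. synthesis observational
equivalence, any cycle on local events at a state implies self-loops on each of its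
events at that state. -/
theorem minimized_quotient_selfloops
    (M : LTS E) (Ec Υ : Finset E) (hΥ : Υ ⊆ M.alph)
    (r : M.State → M.State → Prop) (hr : LTS.IsSOE M Ec Υ r)
    (hmin : ∀ r' : (M.quot r).State → (M.quot r).State → Prop,
      LTS.IsSOE (M.quot r) Ec Υ r' → ∀ x y, r' x y → x = y)
    (s : (M.quot r).State) (π : List E) (hne : π ≠ [])
    (hloc : ∀ l ∈ π, l ∈ Υ) (hpath : LTS.Path (M.quot r) s π s) :
    ∀ l ∈ π, (M.quot r).trans s l s :=
  minimized_quotient_selfloops_general M Ec Υ r hr hmin s π hloc hpath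

end CompSynth
end

section
/- The GR(1) projection procedure yields a weaker formula: let φ = ⋀_{i≤n}□◇φᵢ ⟹ ⋀_{j≤m}□◇γⱼ be a GR(1) formula over Σ with each φᵢ and γⱼ a boolean combination of atomic events in conjunctive normal form, and let L ⊆ Σ. Let α be the formula obtained from φ by, for every event l ∈ L, replacing every occurrence of the literals l and ¬l by false in each φᵢ and by true in each γⱼ. Then every infinite trace π ∈ Σ^ω with π ⊨ φ also satisfies π ⊨ α. -/
/-!
Deleting literals from a clause strengthens it, so each projected assumption implies the
original one; deleting whole clauses from a CNF weakens it, so each original guarantee implies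
the projected one. As `□◇` is monotone, if the projected assumptions hold infinitely often then
so do the original ones, hence the original guarantees, hence the projected guarantees.
-/

namespace CompSynth

variable {E : Type} [DecidableEq E]

open LTS

/-- A literal: an event together with its polarity. -/
def litToLTL (lit : E × Bool) : LTL E :=
  if lit.2 then LTL.atom lit.1 else LTL.neg (LTL.atom lit.1)

/-- A clause (disjunction of literals) as an LTL formula. -/
def clauseToLTL (cl : List (E × Bool)) : LTL E := LTL.disjList (cl.map litToLTL)

/-- A boolean combination of events in conjunctive normal form, as an LTL formula. -/
def cnfToLTL (c : List (List (E × Bool))) : LTL E := LTL.conjList (c.map clauseToLTL)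

/-- Replace, in an assumption, every literal over an event of `L` by `false`
(i.e. delete the literal from its clause). -/
def projAssum (L : Finset E) (c : List (List (E × Bool))) : List (List (E × Bool)) :=
  c.map fun cl => cl.filter fun lit => decide (lit.1 ∉ L)

/-- Replace, in a guarantee, every literal over an event of `L` by `true`
(i.e. delete every clause containing such a literal). -/
def projGuar (L : Finset E) (c : List (List (E × Bool))) : List (List (E × Bool)) :=
  c.filter fun cl => cl.all fun lit => decide (lit.1 ∉ L)

open LTL

section
omit [DecidableEq E]

namespace LTL

variable {π : ℕ → E} {i : ℕ} {φ ψ : LTL E}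

@[simp]
theorem satAt_andf : satAt π (andf φ ψ) i ↔ satAt π φ i ∧ satAt π ψ i := by
  simp [andf, satAt]

@[simp]
theorem satAt_imp : satAt π (imp φ ψ) i ↔ (satAt π φ i → satAt π ψ i) := by
  simp [imp, satAt, imp_iff_not_or]

@[simp]
theorem satAt_conjList {l : List (LTL E)} : satAt π (conjList l) i ↔ ∀ φ ∈ l, satAt π φ i := by
  induction l with
  | nil => simp [conjList, satAt]
  | cons φ l ih => simp_all [conjList]

@[simp]
theorem satAt_disjList {l : List (LTL E)} : satAt π (disjList l) i ↔ ∃ φ ∈ l, satAt π φ i := by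
  induction l with
  | nil => simp [disjList, fls, satAt]
  | cons φ l ih => simp_all [disjList, satAt]

theorem satAt_alwEv : satAt π (alwEv φ) i ↔ ∀ j ≥ i, ∃ k ≥ j, satAt π φ k := by
  simp [alwEv, alw, ev, satAt]

theorem satAt_alwEv_mono (hφψ : ∀ j, satAt π φ j → satAt π ψ j) :
    satAt π (alwEv φ) i → satAt π (alwEv ψ) i := by
  simp only [satAt_alwEv]
  intro h j hj
  obtain ⟨k, hkj, hk⟩ := h j hj
  exact ⟨k, hkj, hφψ k hk⟩

end LTL

variable {π : ℕ → E} {i : ℕ}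

@[simp]
theorem satAt_clauseToLTL {cl : List (E × Bool)} :
    satAt π (clauseToLTL cl) i ↔ ∃ lit ∈ cl, satAt π (litToLTL lit) i := by
  simp only [clauseToLTL, satAt_disjList, List.mem_map]
  exact ⟨fun ⟨_, ⟨lit, hlit, rfl⟩, hsat⟩ => ⟨lit, hlit, hsat⟩,
    fun ⟨lit, hlit, hsat⟩ => ⟨_, ⟨lit, hlit, rfl⟩, hsat⟩⟩

@[simp]
theorem satAt_cnfToLTL {c : List (List (E × Bool))} :
    satAt π (cnfToLTL c) i ↔ ∀ cl ∈ c, satAt π (clauseToLTL cl) i := by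
  simp only [cnfToLTL, satAt_conjList, List.forall_mem_map]

theorem satAt_GR1 {As Gs : List (LTL E)} :
    satAt π (GR1 As Gs) i ↔
      ((∀ φ ∈ As, satAt π (alwEv φ) i) → ∀ γ ∈ Gs, satAt π (alwEv γ) i) := by
  simp [GR1]

theorem satAt_GR1_weaken {As As' Gs Gs' : List (LTL E)}
    (hAs : ∀ φ ∈ As, ∃ φ' ∈ As', ∀ j, satAt π φ' j → satAt π φ j)
    (hGs : ∀ γ' ∈ Gs', ∃ γ ∈ Gs, ∀ j, satAt π γ j → satAt π γ' j)
    (h : satAt π (GR1 As Gs) i) : satAt π (GR1 As' Gs') i := by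
  rw [satAt_GR1] at h ⊢
  intro hA' γ' hγ'
  obtain ⟨γ, hγ, hγγ'⟩ := hGs γ' hγ'
  refine satAt_alwEv_mono hγγ' (h (fun φ hφ => ?_) γ hγ)
  obtain ⟨φ', hφ', hφ'φ⟩ := hAs φ hφ
  exact satAt_alwEv_mono hφ'φ (hA' φ' hφ')

end

variable {π : ℕ → E} {i : ℕ}

theorem satAt_cnfToLTL_of_projAssum {L : Finset E} {c : List (List (E × Bool))}
    (h : satAt π (cnfToLTL (projAssum L c)) i) : satAt π (cnfToLTL c) i := by
  simp only [satAt_cnfToLTL, projAssum, List.forall_mem_map, satAt_clauseToLTL] at h ⊢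
  intro cl hcl
  obtain ⟨lit, hlit, hsat⟩ := h cl hcl
  exact ⟨lit, List.mem_of_mem_filter hlit, hsat⟩

theorem satAt_cnfToLTL_projGuar {L : Finset E} {c : List (List (E × Bool))}
    (h : satAt π (cnfToLTL c) i) : satAt π (cnfToLTL (projGuar L c)) i := by
  rw [satAt_cnfToLTL] at h ⊢
  exact fun cl hcl => h cl (List.mem_of_mem_filter hcl)

theorem gr1_projection_weaker_general
    (L : Finset E)
    (As Gs : List (List (List (E × Bool))))
    (π : ℕ → E)
    (h : LTL.sat π (GR1 (As.map cnfToLTL) (Gs.map cnfToLTL))) :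
    LTL.sat π (GR1 ((As.map (projAssum L)).map cnfToLTL)
                   ((Gs.map (projGuar L)).map cnfToLTL)) := by
  refine satAt_GR1_weaken (fun φ hφ => ?_) (fun γ' hγ' => ?_) h
  · obtain ⟨c, hc, rfl⟩ := List.mem_map.1 hφ
    exact ⟨_, List.mem_map_of_mem (List.mem_map_of_mem hc),
      fun _ => satAt_cnfToLTL_of_projAssum⟩
  · obtain ⟨_, hmem, rfl⟩ := List.mem_map.1 hγ'
    obtain ⟨c, hc, rfl⟩ := List.mem_map.1 hmem
    exact ⟨_, List.mem_map_of_mem hc, fun _ => satAt_cnfToLTL_projGuar⟩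

/-- The GR(1) projection procedure yields a weaker formula. -/
theorem gr1_projection_weaker
    (SS L : Finset E) (hL : L ⊆ SS)
    (As Gs : List (List (List (E × Bool))))
    (hAs : ∀ c ∈ As, ∀ cl ∈ c, ∀ lit ∈ cl, lit.1 ∈ SS)
    (hGs : ∀ c ∈ Gs, ∀ cl ∈ c, ∀ lit ∈ cl, lit.1 ∈ SS)
    (π : ℕ → E) (hπ : ∀ i, π i ∈ SS)
    (h : LTL.sat π (GR1 (As.map cnfToLTL) (Gs.map cnfToLTL))) :
    LTL.sat π (GR1 ((As.map (projAssum L)).map cnfToLTL)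
                   ((Gs.map (projGuar L)).map cnfToLTL)) :=
  gr1_projection_weaker_general L As Gs π h

end CompSynth
end

section
/- Stripping losing states preserves realizability: let E = ⟨M, Σ_c, φ⟩ be a realizable control problem with plant M = (S, Σ, →, ŝ), and let M_w be the LTS whose states are the winning states of E, whose initial state is ŝ, and whose transitions are all transitions of M between winning states. Then every solution of E is also a solution of ⟨M_w, Σ_c, φ⟩; in particular ⟨M_w, Σ_c, φ⟩ is realizable. -/
namespace CompSynth

variable {E : Type} [DecidableEq E]

open LTS

private lemma reach_swap (A B : LTS E) {p : (A.par B).State} (h : Reach (A.par B) p) :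
    Reach (B.par A) (p.2, p.1) := by
  induction h with
  | init => exact Reach.init
  | @step s l t hs ht ih =>
      refine Reach.step (l := l) ih ?_
      rcases ht with ⟨h1,h2,h3,h4⟩ | ⟨h1,h2,h3,h4⟩ | ⟨h1,h2,h3,h4⟩
      · exact Or.inr (Or.inl ⟨h1,h2,h3,h4⟩)
      · exact Or.inl ⟨h1,h2,h3,h4⟩
      · exact Or.inr (Or.inr ⟨h2,h1,h4,h3⟩)

/-- Stripping losing states preserves realizability: every solution of a
realizable control problem is also a solution of the problem whose plant is restricted
to the winning states. -/
theorem strip_losing_states (M : LTS E) (Ec : Finset E) (φ : LTL E)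
    (hMdet : LTS.Deterministic M)
    (hreal : ∃ C, Solution M Ec φ C)
    (hinit : M.init ∈ {s : M.State | Winning M Ec φ s}) :
    (∀ C, Solution M Ec φ C →
      Solution (M.restrict {s : M.State | Winning M Ec φ s} hinit) Ec φ C) ∧
    (∃ C, Solution (M.restrict {s : M.State | Winning M Ec φ s} hinit) Ec φ C) := by
  have main : ∀ C, Solution M Ec φ C →
      Solution (M.restrict {s : M.State | Winning M Ec φ s} hinit) Ec φ C := by
    intro C hC
    obtain ⟨hdet, hleg, hdf, hsat⟩ := hC
    have tproj : ∀ (q q' : ((M.restrict {s : M.State | Winning M Ec φ s} hinit).par C).State)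
        (l : E),
        ((M.restrict {s : M.State | Winning M Ec φ s} hinit).par C).trans q l q' →
        (M.par C).trans (q.1.1, q.2) l (q'.1.1, q'.2) := by
      rintro ⟨⟨s,hs⟩,c⟩ ⟨⟨t,htw⟩,c'⟩ l (⟨h1,h2,h3,h4⟩|⟨h1,h2,h3,h4⟩|⟨h1,h2,h3,h4⟩)
      · exact Or.inl ⟨h1,h2,h3,h4⟩
      · exact Or.inr (Or.inl ⟨h1,h2,h3, by simpa using congrArg Subtype.val h4⟩)
      · exact Or.inr (Or.inr ⟨h1,h2,h3,h4⟩)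
    have rproj : ∀ q, Reach ((M.restrict {s : M.State | Winning M Ec φ s} hinit).par C) q →
        Reach (M.par C) (q.1.1, q.2) := by
      intro q h
      induction h with
      | init => exact Reach.init
      | step hs ht ih => exact Reach.step ih (tproj _ _ _ ht)
    have hwin : ∀ s c, Reach (M.par C) (s, c) → Winning M Ec φ s := by
      intro s c h
      exact ⟨C, ⟨hdet,hleg,hdf,hsat⟩, c, reach_swap M C h⟩
    refine ⟨hdet, ?_, ?_, ?_⟩
    · intro p hp l hl
      have hp' := rproj p hp
      have hl' : l ∈ M.alph \ Ec := hl
      have hiff := hleg (p.1.1, p.2) hp' l hl'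
      constructor
      · rintro ⟨q, (⟨h1,_⟩|⟨_,_,h3,_⟩|⟨h1,_⟩)⟩
        · exact ⟨q.1, h1⟩
        · exact absurd (Finset.mem_sdiff.mp hl').1 h3
        · exact ⟨q.1, h1⟩
      · rintro ⟨t, ht⟩
        obtain ⟨q', hq'⟩ := hiff.mpr ⟨t.1, ht⟩
        rcases hq' with ⟨h1,h2,h3,h4⟩|⟨_,_,h3,_⟩|⟨h1,h2,h3,h4⟩
        · exact ⟨(t, p.2), Or.inl ⟨ht, h2, h3, rfl⟩⟩
        · exact absurd (Finset.mem_sdiff.mp hl').1 h3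
        · exact ⟨(t, q'.2), Or.inr (Or.inr ⟨ht, h2, h3, h4⟩)⟩
    · intro p hp
      have hp' := rproj p hp
      obtain ⟨l, q', ht⟩ := hdf (p.1.1, p.2) hp'
      have hq'reach : Reach (M.par C) q' := Reach.step hp' ht
      rcases ht with ⟨h1,h2,h3,h4⟩|⟨h1,h2,h3,h4⟩|⟨h1,h2,h3,h4⟩
      · have hw : Winning M Ec φ q'.1 := hwin _ _ hq'reach
        exact ⟨l, (⟨q'.1, hw⟩, q'.2), Or.inl ⟨h1, h2, h3, h4⟩⟩
      · exact ⟨l, (p.1, q'.2), Or.inr (Or.inl ⟨h1, h2, h3, rfl⟩)⟩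
      · have hw : Winning M Ec φ q'.1 := hwin _ _ hq'reach
        exact ⟨l, (⟨q'.1, hw⟩, q'.2), Or.inr (Or.inr ⟨h1, h2, h3, h4⟩)⟩
    · intro π hπ
      obtain ⟨ρ, hρ0, hρ⟩ := hπ
      refine hsat π ⟨fun i => ((ρ i).1.1, (ρ i).2), ?_, fun i => tproj _ _ _ (hρ i)⟩
      exact congrArg (fun q => ((q.1.1 : M.State), q.2)) hρ0
  obtain ⟨C, hC⟩ := hreal
  exact ⟨main, C, main C hC⟩

end CompSynth
end
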